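/- Let μ = (a+1, b-1) with a+1 > b-1 and b ≥ 3, and for 2 ≤ i < j ≤ b-1 let w_{ij} = (a, 1^{i-2}, 2, 1^{j-1-i}, 2, 1^{b-1-j}) (content: a copies of 1, two copies each of i and j, and one copy of every other entry in {2,…,b-1}). Then the number of standard tableaux of shape μ and content w_{ij} equals b-2. -/

import Mathlib

/-- A standard tableau of two-row shape `(μ₁, μ₂)` with entries in `{1, …, n}`:
rows weakly increase left to right, columns strictly increase top to bottom. -/
structure TwoRowStandardTableau (μ1 μ2 n : ℕ) where
  row1 : Fin μ1 → ℕ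
  row2 : Fin μ2 → ℕ
  row1_mem : ∀ p, 1 ≤ row1 p ∧ row1 p ≤ n
  row2_mem : ∀ p, 1 ≤ row2 p ∧ row2 p ≤ n
  row1_mono : Monotone row1
  row2_mono : Monotone row2
  col_strict : ∀ (p : Fin μ2) (h : (p : ℕ) < μ1), row1 ⟨(p : ℕ), h⟩ < row2 p

/-- The content of a tableau: the number of occurrences of the entry `k`. -/
def TwoRowStandardTableau.content {μ1 μ2 n : ℕ} (T : TwoRowStandardTableau μ1 μ2 n)
    (k : ℕ) : ℕ :=
  (Finset.univ.filter fun p => T.row1 p = k).card +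
    (Finset.univ.filter fun p => T.row2 p = k).card


/-! All `a` ones of the content lie in the first row, since an entry of the second row exceeds
the entry above it, which is at least `1`. So the first row is `1^a m` for a single entry `m`,
necessarily one of `2, …, b - 1`. A sorted row is determined by its multiset of entries, so the
second row is the sorted remainder of the content; conversely, as `b - 1 ≤ a`, every column of
that filling has a `1` on top, so each such `m` gives a standard tableau. -/

open Finset

section MonotoneFin
variable {α : Type*} {N : ℕ}

theorem Fin.card_filter_eq_count_map [DecidableEq α] (f : Fin N → α) (x : α) :
    #{p | f p = x} = (univ.val.map f).count x := by
  rw [Multiset.count_map]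
  simp only [eq_comm]
  rfl

variable [LinearOrder α]

theorem Monotone.eq_of_map_univ_eq {f g : Fin N → α} (hf : Monotone f) (hg : Monotone g)
    (h : univ.val.map f = univ.val.map g) : f = g := by
  simp only [Fin.univ_val_map, Multiset.coe_eq_coe] at h
  exact List.ofFn_injective (h.eq_of_sortedLE hf.sortedLE_ofFn hg.sortedLE_ofFn)

theorem Multiset.exists_monotone_map_univ_eq (M : Multiset α) (hN : M.card = N) :
    ∃ f : Fin N → α, Monotone f ∧ univ.val.map f = M := by
  obtain ⟨l, hl, rfl⟩ : ∃ l : List α, l.SortedLE ∧ (l : Multiset α) = M :=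
    ⟨M.sort (· ≤ ·), (M.pairwise_sort _).sortedLE, M.sort_eq _⟩
  rw [Multiset.coe_card] at hN
  subst hN
  exact ⟨l.get, hl, by rw [Fin.univ_val_map, List.ofFn_get]⟩

theorem Monotone.apply_le_of_lt_card_filter_le {f : Fin N → α} (hf : Monotone f) {c : α}
    {p : Fin N} (hp : (p : ℕ) < #{q | f q ≤ c}) : f p ≤ c := by
  by_contra! hc
  have hsub : ({q | f q ≤ c} : Finset (Fin N)) ⊆ Iio p := fun q hq =>
    mem_Iio.mpr (hf.reflect_lt ((mem_filter.mp hq).2.trans_lt hc))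
  have := card_le_card hsub
  rw [Fin.card_Iio] at this
  omega

end MonotoneFin

namespace TwoRowStandardTableau
variable {μ1 μ2 n : ℕ}

theorem ext {T T' : TwoRowStandardTableau μ1 μ2 n} (h1 : T.row1 = T'.row1)
    (h2 : T.row2 = T'.row2) : T = T' := by
  cases T
  cases T'
  subst h1 h2
  rfl

def entries (T : TwoRowStandardTableau μ1 μ2 n) : Multiset ℕ :=
  univ.val.map T.row1 + univ.val.map T.row2

theorem content_eq_count_entries (T : TwoRowStandardTableau μ1 μ2 n) (k : ℕ) :
    T.content k = T.entries.count k := by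
  simp only [content, entries, Multiset.count_add, Fin.card_filter_eq_count_map]

theorem ext_of_entries_eq {T T' : TwoRowStandardTableau μ1 μ2 n} (h : T.entries = T'.entries)
    (h1 : T.row1 = T'.row1) : T = T' := by
  refine ext h1 (T.row2_mono.eq_of_map_univ_eq T'.row2_mono ?_)
  simpa only [entries, h1, add_right_inj] using h

theorem one_lt_row2 (hμ : μ2 ≤ μ1) (T : TwoRowStandardTableau μ1 μ2 n) (p : Fin μ2) :
    1 < T.row2 p :=
  (T.row1_mem _).1.trans_lt (T.col_strict p (by omega))

end TwoRowStandardTableau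

open TwoRowStandardTableau

def firstRow (a m : ℕ) (p : Fin (a + 1)) : ℕ := if (p : ℕ) < a then 1 else m

theorem firstRow_mono {a m : ℕ} (hm : 1 ≤ m) : Monotone (firstRow a m) := by
  intro p q hpq
  have : (p : ℕ) ≤ q := hpq
  unfold firstRow
  split_ifs <;> omega

theorem map_firstRow (a m : ℕ) :
    univ.val.map (firstRow a m) = m ::ₘ Multiset.replicate a 1 := by
  rw [Fin.univ_val_map, List.ofFn_succ']
  simp only [firstRow, Fin.val_castSucc, Fin.is_lt, if_true, Fin.val_last, lt_irrefl, if_false,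
    List.ofFn_const]
  rw [List.concat_eq_append, ← Multiset.coe_replicate, Multiset.cons_coe, Multiset.coe_eq_coe]
  exact List.perm_append_singleton _ _

theorem row1_eq_firstRow {a μ2 n : ℕ} (hμ : μ2 ≤ a + 1)
    (T : TwoRowStandardTableau (a + 1) μ2 n) (h1 : a ≤ T.content 1) :
    T.row1 = firstRow a (T.row1 (Fin.last a)) := by
  have hrow2 : #{p | T.row2 p = 1} = 0 :=
    card_eq_zero.mpr (filter_eq_empty_iff.mpr fun p _ => (T.one_lt_row2 hμ p).ne')
  have hrow1 : a ≤ #{p | T.row1 p ≤ 1} := by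
    refine le_trans ?_ (card_le_card (monotone_filter_right _ fun _ _ h => le_of_eq h))
    simpa only [content, hrow2, add_zero] using h1
  funext p
  unfold firstRow
  split_ifs with hp
  · exact le_antisymm (T.row1_mono.apply_le_of_lt_card_filter_le (hp.trans_le hrow1))
      (T.row1_mem p).1
  · rw [Fin.eq_last_of_not_lt hp]

section Weight
variable {a b i j n : ℕ}

/-- The content `w_{ij}` of the theorem, as a multiset of entries. -/
def weight (a b i j : ℕ) : Multiset ℕ :=
  Multiset.replicate a 1 + {i, j} + (Icc 2 (b - 1)).val

theorem count_weight (hi : 2 ≤ i) (hij : i < j) (hjb : j ≤ b - 1) (k : ℕ) :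
    (weight a b i j).count k =
      if k = 1 then a else if k = i ∨ k = j then 2
      else if 2 ≤ k ∧ k ≤ b - 1 then 1 else 0 := by
  simp only [weight, Multiset.count_add, Multiset.count_replicate, Multiset.insert_eq_cons,
    Multiset.count_cons, Multiset.count_singleton,
    Multiset.count_eq_of_nodup (Icc 2 (b - 1)).nodup, mem_val, mem_Icc]
  split_ifs <;> omega

theorem row1_eq_firstRow_of_entries_eq_weight (hi : 2 ≤ i) (hij : i < j) (hjb : j ≤ b - 1)
    (hμ : b - 1 < a + 1) {T : TwoRowStandardTableau (a + 1) (b - 1) n}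
    (hT : T.entries = weight a b i j) : T.row1 = firstRow a (T.row1 (Fin.last a)) := by
  refine row1_eq_firstRow hμ.le T ?_
  rw [content_eq_count_entries, hT, count_weight hi hij hjb, if_pos rfl]

theorem row1_last_mem_Icc (hi : 2 ≤ i) (hij : i < j) (hjb : j ≤ b - 1) (hμ : b - 1 < a + 1)
    {T : TwoRowStandardTableau (a + 1) (b - 1) n} (hT : T.entries = weight a b i j) :
    T.row1 (Fin.last a) ∈ Set.Icc 2 (b - 1) := by
  set m := T.row1 (Fin.last a)
  have hle : m ::ₘ Multiset.replicate a 1 ≤ weight a b i j := by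
    rw [← map_firstRow, ← row1_eq_firstRow_of_entries_eq_weight hi hij hjb hμ hT, ← hT]
    exact Multiset.le_add_right _ _
  have hm := Multiset.count_le_of_le m hle
  rw [Multiset.count_cons_self, Multiset.count_replicate, count_weight hi hij hjb] at hm
  constructor <;> split_ifs at hm <;> omega

theorem exists_entries_eq_weight (hi : 2 ≤ i) (hij : i < j) (hjb : j ≤ b - 1)
    (hμ : b - 1 < a + 1) (hn : a + b ≤ n) {m : ℕ} (hm : m ∈ Set.Icc 2 (b - 1)) :
    ∃ T : TwoRowStandardTableau (a + 1) (b - 1) n,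
      T.entries = weight a b i j ∧ T.row1 (Fin.last a) = m := by
  obtain ⟨hm2, hmb⟩ := hm
  set R := m ::ₘ Multiset.replicate a 1
  have hcountR (k : ℕ) : R.count k = (if k = m then 1 else 0) + if k = 1 then a else 0 := by
    rw [Multiset.count_cons, Multiset.count_replicate, add_comm]
    split_ifs <;> omega
  have hle : R ≤ weight a b i j := Multiset.le_iff_count.mpr fun k => by
    rw [hcountR, count_weight hi hij hjb]
    split_ifs <;> omega
  have hcard : (weight a b i j - R).card = b - 1 := by
    rw [Multiset.card_sub hle]
    simp only [weight, R, Multiset.card_add, Multiset.card_replicate, Multiset.insert_eq_cons,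
      Multiset.card_cons, Multiset.card_singleton, card_val, Nat.card_Icc]
    omega
  have hrest (x : ℕ) (hx : x ∈ weight a b i j - R) : 2 ≤ x ∧ x ≤ b - 1 := by
    rw [← Multiset.count_pos, Multiset.count_sub, hcountR, count_weight hi hij hjb] at hx
    split_ifs at hx <;> omega
  obtain ⟨f, hf, hmap⟩ := (weight a b i j - R).exists_monotone_map_univ_eq hcard
  have hf2 (p : Fin (b - 1)) : 2 ≤ f p ∧ f p ≤ b - 1 :=
    hrest _ (hmap ▸ Multiset.mem_map_of_mem f (mem_univ_val p))
  refine ⟨⟨firstRow a m, f, fun p => ?_, fun p => ?_, firstRow_mono (by omega), hf,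
    fun p hp => ?_⟩, ?_, ?_⟩
  · unfold firstRow
    split_ifs <;> omega
  · have := hf2 p
    omega
  · rw [firstRow, if_pos (show (p : ℕ) < a by omega)]
    exact (hf2 p).1
  · simp only [entries, map_firstRow, hmap, R]
    exact add_tsub_cancel_of_le hle
  · simp [firstRow]

end Weight

theorem stmt_11_general (a b i j n : ℕ) (hi : 2 ≤ i) (hij : i < j) (hjb : j ≤ b - 1)
    (hμ : b - 1 < a + 1) (hn : a + b ≤ n) :
    Nat.card {T : TwoRowStandardTableau (a + 1) (b - 1) n //
      ∀ k, T.content k =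
        if k = 1 then a else if k = i ∨ k = j then 2
        else if 2 ≤ k ∧ k ≤ b - 1 then 1 else 0} =
      b - 2 := by
  have hcontent (T : TwoRowStandardTableau (a + 1) (b - 1) n) :
      (∀ k, T.content k = if k = 1 then a else if k = i ∨ k = j then 2
        else if 2 ≤ k ∧ k ≤ b - 1 then 1 else 0) ↔ T.entries = weight a b i j := by
    simp only [content_eq_count_entries, ← count_weight hi hij hjb]
    exact Multiset.ext.symm
  let lastEntry (T : {T : TwoRowStandardTableau (a + 1) (b - 1) n // T.entries = weight a b i j}) :
      Set.Icc 2 (b - 1) := ⟨T.1.row1 (Fin.last a), row1_last_mem_Icc hi hij hjb hμ T.2⟩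
  have hbij : lastEntry.Bijective := by
    refine ⟨fun T T' h => Subtype.ext (ext_of_entries_eq (T.2.trans T'.2.symm) ?_), fun m => ?_⟩
    · rw [row1_eq_firstRow_of_entries_eq_weight hi hij hjb hμ T.2,
        row1_eq_firstRow_of_entries_eq_weight hi hij hjb hμ T'.2]
      exact congrArg (firstRow a) (Subtype.ext_iff.mp h)
    · obtain ⟨T, hT, hlast⟩ := exists_entries_eq_weight hi hij hjb hμ hn m.2
      exact ⟨⟨T, hT⟩, Subtype.ext hlast⟩
  rw [Nat.card_congr (Equiv.subtypeEquivRight hcontent), Nat.card_eq_of_bijective lastEntry hbij,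
    Nat.card_coe_set_eq, Set.ncard_Icc_nat]
  omega

/-- The number of standard tableaux of shape `μ = (a+1, b-1)` and content
`w_{ij} = (a, 1^{i-2}, 2, 1^{j-1-i}, 2, 1^{b-1-j})` (entry `1` appearing `a` times, entries
`i` and `j` twice each, and every other entry of `{2, …, b-1}` once) is `b - 2`. -/
theorem stmt_11 (a b i j n : ℕ) (hb : 3 ≤ b) (hi : 2 ≤ i) (hij : i < j) (hjb : j ≤ b - 1)
    (hμ : b - 1 < a + 1) (hn : a + b ≤ n) :
    Nat.card {T : TwoRowStandardTableau (a + 1) (b - 1) n //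
      ∀ k, T.content k =
        if k = 1 then a else if k = i ∨ k = j then 2
        else if 2 ≤ k ∧ k ≤ b - 1 then 1 else 0} =
      b - 2 :=
  stmt_11_general a b i j n hi hij hjb hμ hn
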